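/- Let d ≥ 2, f ∈ [−1,1], and let ρ_f be the Werner state on ℂ^d ⊗ ℂ^d. Then τ(𝔄(ρ_f)) = 2/d − f if −1 ≤ f ≤ 1/d, and τ(𝔄(ρ_f)) = f if 1/d ≤ f ≤ 1. -/

import Mathlib

open scoped Matrix Kronecker BigOperators ComplexOrder
open MeasureTheory

/-- The positive semidefinite square root of a positive semidefinite matrix (as in the older
Mathlib, where it was `Matrix.PosSemidef.sqrt`). -/
noncomputable def Matrix.PosSemidef.sqrt {n : Type*} [Fintype n] [DecidableEq n]
    {A : Matrix n n ℂ} (hA : A.PosSemidef) : Matrix n n ℂ :=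
  hA.isHermitian.eigenvectorUnitary.1 * Matrix.diagonal ((↑) ∘ (√·) ∘ hA.isHermitian.eigenvalues) *
    (star hA.isHermitian.eigenvectorUnitary : Matrix n n ℂ)

/-- Trace norm of a complex square matrix: `tr √(AᴴA)` (the sum of singular values). -/
noncomputable def traceNorm {n : Type*} [Fintype n] [DecidableEq n] (A : Matrix n n ℂ) : ℝ :=
  ((Matrix.posSemidef_conjTranspose_mul_self A).sqrt.trace).re

/-- The greatest cross norm `‖·‖_γ` of an operator on `ℂ^{d₁} ⊗ ℂ^{d₂}`: the infimum of
`Σᵢ ‖uᵢ‖₁ ‖vᵢ‖₁` over all finite decompositions `T = Σᵢ uᵢ ⊗ vᵢ` into Kronecker products. -/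
noncomputable def gcn {d₁ d₂ : ℕ} (T : Matrix (Fin d₁ × Fin d₂) (Fin d₁ × Fin d₂) ℂ) : ℝ :=
  sInf { r : ℝ | ∃ (n : ℕ) (u : Fin n → Matrix (Fin d₁) (Fin d₁) ℂ)
      (v : Fin n → Matrix (Fin d₂) (Fin d₂) ℂ),
      T = ∑ i, u i ⊗ₖ v i ∧ r = ∑ i, traceNorm (u i) * traceNorm (v i) }

/-- A density matrix: positive semidefinite with trace one. -/
def IsDensityMatrix {n : Type*} [Fintype n] (ρ : Matrix n n ℂ) : Prop :=
  ρ.PosSemidef ∧ ρ.trace = 1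

/-- Separability of a state on `ℂ^{d₁} ⊗ ℂ^{d₂}`: a finite convex-type combination
`ρ = Σᵢ ωᵢ ρᵢ⁽¹⁾ ⊗ ρᵢ⁽²⁾` of Kronecker products of density matrices, with `ωᵢ ≥ 0`. -/
def IsSeparable' {d₁ d₂ : ℕ} (ρ : Matrix (Fin d₁ × Fin d₂) (Fin d₁ × Fin d₂) ℂ) : Prop :=
  ∃ (n : ℕ) (ω : Fin n → ℝ) (ρ₁ : Fin n → Matrix (Fin d₁) (Fin d₁) ℂ)
    (ρ₂ : Fin n → Matrix (Fin d₂) (Fin d₂) ℂ),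
    (∀ i, 0 ≤ ω i) ∧ (∀ i, IsDensityMatrix (ρ₁ i)) ∧ (∀ i, IsDensityMatrix (ρ₂ i)) ∧
    ρ = ∑ i, (ω i : ℂ) • (ρ₁ i ⊗ₖ ρ₂ i)

/-- The realignment map `𝔄`: `𝔄(ρ)_{(i,j),(k,l)} = ρ_{(i,k),(j,l)}`. -/
def realign {d : ℕ} (ρ : Matrix (Fin d × Fin d) (Fin d × Fin d) ℂ) :
    Matrix (Fin d × Fin d) (Fin d × Fin d) ℂ :=
  Matrix.of fun p q => ρ (p.1, q.1) (p.2, q.2)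

/-- `τ(𝔄(ρ))`: the trace norm of the realignment of `ρ`. -/
noncomputable def tauRealign {d : ℕ} (ρ : Matrix (Fin d × Fin d) (Fin d × Fin d) ℂ) : ℝ :=
  traceNorm (realign ρ)

/-- The flip operator `𝔽 = Σ_{i,j} |i⊗j⟩⟨j⊗i|` on `ℂ^d ⊗ ℂ^d`. -/
def flipOp (d : ℕ) : Matrix (Fin d × Fin d) (Fin d × Fin d) ℂ :=
  Matrix.of fun p q => if p.1 = q.2 ∧ p.2 = q.1 then 1 else 0

/-- The Werner state `ρ_f = (1/(d³−d))((d−f) I + (df−1) 𝔽)` on `ℂ^d ⊗ ℂ^d`. -/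
noncomputable def wernerState (d : ℕ) (f : ℝ) : Matrix (Fin d × Fin d) (Fin d × Fin d) ℂ :=
  (((d : ℂ) ^ 3 - d)⁻¹) • (((d : ℂ) - (f : ℂ)) • (1 : Matrix (Fin d × Fin d) (Fin d × Fin d) ℂ)
    + ((d : ℂ) * (f : ℂ) - 1) • flipOp d)

/-- The maximally entangled vector `|Ψ⁺⟩ = (1/√d) Σᵢ |i⊗i⟩` on `ℂ^d ⊗ ℂ^d`. -/
noncomputable def psiPlus (d : ℕ) : Fin d × Fin d → ℂ :=
  fun p => if p.1 = p.2 then ((1 / Real.sqrt d : ℝ) : ℂ) else 0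

/-- The isotropic state `ρ_F = ((1−F)/(d²−1))(I − |Ψ⁺⟩⟨Ψ⁺|) + F |Ψ⁺⟩⟨Ψ⁺|` on `ℂ^d ⊗ ℂ^d`. -/
noncomputable def isotropicState (d : ℕ) (F : ℝ) : Matrix (Fin d × Fin d) (Fin d × Fin d) ℂ :=
  (((1 - F : ℝ) : ℂ) / ((d : ℂ) ^ 2 - 1)) •
      ((1 : Matrix (Fin d × Fin d) (Fin d × Fin d) ℂ)
        - Matrix.vecMulVec (psiPlus d) (star (psiPlus d)))
    + ((F : ℝ) : ℂ) • Matrix.vecMulVec (psiPlus d) (star (psiPlus d))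

section
open scoped MatrixOrder Matrix.Norms.L2Operator
lemma psd_eq_sqrt_of_sq_eq {n : Type*} [Fintype n] [DecidableEq n] {B C : Matrix n n ℂ}
    (hB : B.PosSemidef) (hC : C.PosSemidef) (h : B ^ 2 = C) : B = hC.sqrt := by
  have e : hC.sqrt = cfc Real.sqrt C := by
    rw [hC.1.cfc_eq, Matrix.IsHermitian.cfc, Unitary.conjStarAlgAut_apply]
    rfl
  rw [e, ← cfcₙ_eq_cfc (hf0 := Real.sqrt_zero), ← CFC.sqrt_eq_real_sqrt C hC.nonneg, ← h, CFC.sqrt_sq B hB.nonneg]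
end

lemma traceNorm_eq_of {n : Type*} [Fintype n] [DecidableEq n] {A B : Matrix n n ℂ}
    (hB : B.PosSemidef) (h : B ^ 2 = Aᴴ * A) : traceNorm A = B.trace.re := by
  unfold traceNorm
  rw [← psd_eq_sqrt_of_sq_eq hB (Matrix.posSemidef_conjTranspose_mul_self A) h]

lemma smul_posSemidef {n : Type*} [Fintype n] {M : Matrix n n ℂ} (hM : M.PosSemidef)
    {c : ℝ} (hc : 0 ≤ c) : ((c : ℂ) • M).PosSemidef := by
  exact hM.smul (by exact_mod_cast hc)

lemma vecMulVec_posSemidef {n : Type*} [Fintype n] (v : n → ℂ) :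
    (Matrix.vecMulVec v (star v)).PosSemidef := by
  exact Matrix.posSemidef_vecMulVec_self_star v

section stuff
variable {d : ℕ}

/-- unnormalized maximally entangled vector -/
def vME (d : ℕ) : Fin d × Fin d → ℂ := fun p => if p.1 = p.2 then 1 else 0

noncomputable abbrev WME (d : ℕ) := Matrix.vecMulVec (vME d) (star (vME d))

lemma star_vME : star (vME d) = vME d := by
  funext p
  simp only [Pi.star_apply, vME]
  split <;> simp

lemma WME_apply (p q : Fin d × Fin d) :
    WME d p q = (if p.1 = p.2 then 1 else 0) * (if q.1 = q.2 then 1 else 0) := by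
  rw [WME, star_vME, Matrix.vecMulVec_apply]
  simp [vME]

lemma WME_mul_WME : WME d * WME d = (d : ℂ) • WME d := by
  ext p q
  simp only [Matrix.mul_apply, WME_apply, Matrix.smul_apply, smul_eq_mul]
  rw [Fintype.sum_prod_type]
  simp [ite_mul, mul_ite, Finset.sum_ite_eq, mul_comm, Finset.sum_comm]

lemma flip_mul_flip : flipOp d * flipOp d = 1 := by
  ext p q
  simp only [Matrix.mul_apply, flipOp, Matrix.of_apply, Matrix.one_apply]
  rw [Fintype.sum_prod_type]
  simp [ite_and, Finset.sum_ite_eq, Finset.sum_ite_eq', Prod.ext_iff, eq_comm]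

lemma flip_mul_WME : flipOp d * WME d = WME d := by
  ext p q
  simp only [Matrix.mul_apply, flipOp, Matrix.of_apply, WME_apply]
  rw [Fintype.sum_prod_type]
  simp [ite_and, ite_mul, Finset.sum_ite_eq, Finset.sum_ite_eq', eq_comm]

lemma WME_mul_flip : WME d * flipOp d = WME d := by
  ext p q
  simp only [Matrix.mul_apply, flipOp, Matrix.of_apply, WME_apply]
  rw [Fintype.sum_prod_type]
  simp [ite_and, ite_mul, mul_ite, Finset.sum_ite_eq, Finset.sum_ite_eq', eq_comm]

lemma flip_hermitian : (flipOp d).IsHermitian := by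
  ext p q
  simp only [Matrix.conjTranspose_apply, flipOp, Matrix.of_apply]
  split <;> split <;> simp_all

lemma trace_WME : (WME d).trace = (d : ℂ) := by
  simp only [Matrix.trace, Matrix.diag_apply, WME_apply]
  rw [Fintype.sum_prod_type]
  simp [Finset.sum_ite_eq]

lemma realign_werner (f : ℝ) :
    realign (wernerState d f) = (((d : ℂ) ^ 3 - d)⁻¹ * ((d : ℂ) - f)) • WME d
      + (((d : ℂ) ^ 3 - d)⁻¹ * ((d : ℂ) * f - 1)) • flipOp d := by
  ext p q
  have e2 : (p.1 = q.2 ∧ q.1 = p.2) = (p.1 = q.2 ∧ p.2 = q.1) :=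
    propext (and_congr_right' eq_comm)
  simp only [realign, wernerState, flipOp, Matrix.of_apply, Matrix.add_apply, Matrix.smul_apply,
    Matrix.one_apply, WME_apply, smul_eq_mul, Prod.mk.injEq, e2]
  by_cases h1 : p.1 = p.2 <;> by_cases h2 : q.1 = q.2 <;>
    by_cases h3 : p.1 = q.2 ∧ p.2 = q.1 <;> simp [h1, h2, h3] <;> (try split_ifs) <;> ring

end stuff

lemma quad {d x y : ℝ} (hd0 : d ≠ 0) (h : x * d + y = 1 / d) :
    x * x * d + 2 * (x * y) = (1 / d ^ 2 - y ^ 2) / d := by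
  have hx : x = (1 / d - y) / d := by
    field_simp at h ⊢
    linarith
  subst hx
  field_simp
  ring

lemma expand_sq {d : ℕ} (x y : ℂ) :
    (x • WME d + y • flipOp d) * (x • WME d + y • flipOp d)
      = (x * x * d + 2 * (x * y)) • WME d + (y * y) • (1 : Matrix (Fin d × Fin d) (Fin d × Fin d) ℂ) := by
  simp only [add_mul, mul_add, Matrix.smul_mul, Matrix.mul_smul, WME_mul_WME, flip_mul_flip,
    flip_mul_WME, WME_mul_flip, smul_smul]
  module

lemma expand_sqB {d : ℕ} (x y : ℂ) :
    (x • WME d + y • (1 : Matrix (Fin d × Fin d) (Fin d × Fin d) ℂ)) ^ 2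
      = (x * x * d + 2 * (x * y)) • WME d + (y * y) • (1 : Matrix (Fin d × Fin d) (Fin d × Fin d) ℂ) := by
  rw [pow_two]
  simp only [add_mul, mul_add, Matrix.smul_mul, Matrix.mul_smul, WME_mul_WME, Matrix.mul_one,
    Matrix.one_mul, smul_smul]
  module


/-- Trace norm of the realignment of the Werner state: `τ(𝔄(ρ_f)) = 2/d − f` for
`−1 ≤ f ≤ 1/d` and `τ(𝔄(ρ_f)) = f` for `1/d ≤ f ≤ 1`. -/
theorem tauRealign_wernerState (d : ℕ) (hd : 2 ≤ d) (f : ℝ) (hf : -1 ≤ f ∧ f ≤ 1) :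
    (f ≤ 1 / d → tauRealign (wernerState d f) = 2 / d - f) ∧
    (1 / d ≤ f → tauRealign (wernerState d f) = f) := by
  obtain ⟨hf1, hf2⟩ := hf
  have hdR : (2 : ℝ) ≤ (d : ℝ) := by exact_mod_cast hd
  have hdpos : (0 : ℝ) < d := by linarith
  have hd0 : (d : ℝ) ≠ 0 := hdpos.ne'
  have hden : (0 : ℝ) < (d : ℝ) ^ 3 - d := by
    have : (d : ℝ) ^ 3 - d = d * (d - 1) * (d + 1) := by ring
    rw [this]
    exact mul_pos (mul_pos hdpos (by linarith)) (by linarith)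
  set b : ℝ := ((d : ℝ) * f - 1) / ((d : ℝ) ^ 3 - d) with hb_def
  set a : ℝ := ((d : ℝ) - f) / ((d : ℝ) ^ 3 - d) with ha_def
  set m : ℝ := |b| with hm_def
  set γ : ℝ := (1 / d - m) / d with hγ_def
  have hm0 : 0 ≤ m := abs_nonneg b
  have habs : |(d : ℝ) * f - 1| ≤ (d : ℝ) ^ 2 - 1 := by
    rw [abs_le]; constructor <;> nlinarith
  have hm_le : m ≤ 1 / d := by
    have h1 : m ≤ ((d : ℝ) ^ 2 - 1) / ((d : ℝ) ^ 3 - d) := by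
      rw [hm_def, hb_def, abs_div, abs_of_pos hden]
      exact (div_le_div_iff_of_pos_right hden).mpr habs
    have h2 : ((d : ℝ) ^ 2 - 1) / ((d : ℝ) ^ 3 - d) = 1 / d := by
      rw [div_eq_div_iff hden.ne' hd0]; ring
    linarith [h2 ▸ h1]
  have hγ0 : 0 ≤ γ := div_nonneg (by linarith) hdpos.le
  -- the realigned matrix
  have hdenC : ((d : ℂ) ^ 3 - d) = (((d : ℝ) ^ 3 - d : ℝ) : ℂ) := by push_cast; ring
  have hdenC0 : ((d : ℂ) ^ 3 - d) ≠ 0 := by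
    rw [hdenC]; exact_mod_cast hden.ne'
  have hA : realign (wernerState d f) = ((a : ℝ) : ℂ) • WME d + ((b : ℝ) : ℂ) • flipOp d := by
    rw [realign_werner]
    congr 1
    · congr 1
      rw [ha_def, hdenC]
      push_cast
      field_simp
    · congr 1
      rw [hb_def, hdenC]
      push_cast
      field_simp
  set B : Matrix (Fin d × Fin d) (Fin d × Fin d) ℂ :=
    ((γ : ℝ) : ℂ) • WME d + ((m : ℝ) : ℂ) • 1 with hB_def
  have hBpsd : B.PosSemidef :=
    (smul_posSemidef (vecMulVec_posSemidef _) hγ0).add (smul_posSemidef Matrix.PosSemidef.one hm0)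
  have hAH : (realign (wernerState d f))ᴴ = realign (wernerState d f) := by
    rw [hA]
    simp [Matrix.conjTranspose_add, Matrix.conjTranspose_smul,
      (vecMulVec_posSemidef (vME d)).1.eq, flip_hermitian.eq, Complex.star_def,
      Complex.conj_ofReal]
  -- scalar identities
  have hab : a * (d : ℝ) + b = 1 / d := by
    rw [ha_def, hb_def]; field_simp [show (d : ℝ) ^ 2 - 1 ≠ 0 by nlinarith]; ring
  have hγm : γ * (d : ℝ) + m = 1 / d := by
    rw [hγ_def, div_mul_cancel₀ _ hd0]; ring
  have hsq_real : γ * γ * (d : ℝ) + 2 * (γ * m) = a * a * (d : ℝ) + 2 * (a * b) := by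
    rw [quad hd0 hab, quad hd0 hγm, hm_def, sq_abs]
  have hm2 : m * m = b * b := by rw [hm_def, abs_mul_abs_self]
  have hsq : B ^ 2 = (realign (wernerState d f))ᴴ * realign (wernerState d f) := by
    rw [hAH, hA, expand_sq, hB_def, expand_sqB]
    congr 2
    · exact_mod_cast hsq_real
    · exact_mod_cast hm2
  have htr : B.trace = ((γ * d + m * d ^ 2 : ℝ) : ℂ) := by
    rw [hB_def, Matrix.trace_add, Matrix.trace_smul, Matrix.trace_smul, trace_WME,
      Matrix.trace_one]
    simp only [smul_eq_mul]
    push_cast [Fintype.card_prod, Fintype.card_fin]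
    ring
  have hτ : tauRealign (wernerState d f) = γ * d + m * d ^ 2 := by
    rw [tauRealign, traceNorm_eq_of hBpsd hsq, htr, Complex.ofReal_re]
  constructor
  · intro hcase
    have hdf : (d : ℝ) * f - 1 ≤ 0 := by
      have h := (le_div_iff₀ hdpos).mp hcase
      nlinarith
    have hmcase : m = (1 - (d : ℝ) * f) / ((d : ℝ) ^ 3 - d) := by
      rw [hm_def, hb_def, abs_div, abs_of_pos hden, abs_of_nonpos hdf]
      ring
    rw [hτ, hγ_def, hmcase]
    field_simp [show (d : ℝ) ^ 2 - 1 ≠ 0 by nlinarith]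
    ring
  · intro hcase
    have hdf : 0 ≤ (d : ℝ) * f - 1 := by
      have h := (div_le_iff₀ hdpos).mp hcase
      nlinarith
    have hmcase : m = ((d : ℝ) * f - 1) / ((d : ℝ) ^ 3 - d) := by
      rw [hm_def, hb_def, abs_div, abs_of_pos hden, abs_of_nonneg hdf]
    rw [hτ, hγ_def, hmcase]
    field_simp [show (d : ℝ) ^ 2 - 1 ≠ 0 by nlinarith]
    ring
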